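/- Decompose the λ-bracket on V^N_I obtained by requiring L^ε(∂) = L(∂) + ε·1_I to be super Adler-type as {·_λ·}_ε = {·_λ·}_H + ε{·_λ·}_K (the ε² contribution vanishes). Then the second bracket {·_λ·}_K annihilates the top coefficients: {u_{N-1,ab} λ L_{cd}(w)}_K = 0 and {L_{ab}(z) λ u_{N-1,cd}}_K = 0 for all a,b,c,d ∈ I. -/
import Mathlib


noncomputable section

/-- A differential superalgebra: a `ℤ/2`-graded associative unital `ℂ`-algebra,
supercommutative, with an even derivation `D`. -/
class DiffSuperAlg (V : Type*) extends Ring V, Algebra ℂ V where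
  grading : ZMod 2 → Submodule ℂ V
  gradedAlgebra : GradedAlgebra grading
  D : V → V
  superComm : ∀ (i j : ZMod 2), ∀ a ∈ grading i, ∀ b ∈ grading j,
      a * b = ((-1 : ℂ) ^ (i.val * j.val)) • (b * a)
  D_add : ∀ a b, D (a + b) = D a + D b
  D_smul : ∀ (c : ℂ) (a : V), D (c • a) = c • D a
  D_mul : ∀ a b, D (a * b) = D a * b + a * D b
  D_even : ∀ (i : ZMod 2), ∀ a ∈ grading i, D a ∈ grading i

namespace PDO

variable {V : Type*} [DiffSuperAlg V]

/-- Iterated derivation `∂ⁿ`. -/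
def Dit (n : ℕ) : V → V := (DiffSuperAlg.D (V := V))^[n]

/-- Generalized binomial coefficient `C(k, n)` for `k ∈ ℤ`. -/
def cchoose (k : ℤ) (n : ℕ) : ℂ :=
  (∏ i ∈ Finset.range n, ((k : ℂ) - (i : ℂ))) / (n.factorial : ℂ)

/-- Sign `(-1)^x` of a parity `x ∈ ℤ/2`. -/
def sgn (x : ZMod 2) : ℂ := (-1 : ℂ) ^ x.val

/-- A formal series `Σₖ (f k) ∂ᵏ` is an honest pseudo-differential operator when its
support is bounded above. -/
def IsPDO (f : ℤ → V) : Prop := ∃ N : ℤ, ∀ k : ℤ, N < k → f k = 0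

/-- `f` is monic of order `N`. -/
def IsMonic (f : ℤ → V) (N : ℤ) : Prop :=
  f N = 1 ∧ ∀ k : ℤ, N < k → f k = 0

/-- `f` is a differential operator of order at most `N`. -/
def IsDiffOpLE (f : ℤ → V) (N : ℕ) : Prop := ∀ k : ℤ, f k ≠ 0 → 0 ≤ k ∧ k ≤ (N : ℤ)

/-- All coefficients of `f` are homogeneous of parity `π`. -/
def IsHomog (f : ℤ → V) (π : ZMod 2) : Prop :=
  ∀ k : ℤ, f k ∈ DiffSuperAlg.grading (V := V) π

/-- The product of pseudo-differential operators, obtained from the rule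
`∂ᵏ v = Σₙ C(k,n) v⁽ⁿ⁾ ∂^(k-n)`. -/
def pmul (f g : ℤ → V) : ℤ → V := fun m =>
  ∑ᶠ (k : ℤ) (j : ℤ) (n : ℕ),
    if m = k + j - (n : ℤ) then cchoose k n • (f k * Dit n (g j)) else 0

/-- The identity operator. -/
def one : ℤ → V := fun m => if m = 0 then 1 else 0

/-- The operator `∂^e`. -/
def del (e : ℤ) : ℤ → V := fun m => if m = e then 1 else 0

/-- The adjoint `A*(∂) = Σₖ (-∂)ᵏ aₖ`, coefficientwise. -/
def adj (f : ℤ → V) : ℤ → V := fun m =>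
  ∑ᶠ n : ℕ, ((-1 : ℂ) ^ (m + (n : ℤ)) * cchoose (m + n) n) • Dit n (f (m + n))

/-- The residue `Res A = a₋₁`. -/
def res (f : ℤ → V) : V := f (-1)

/-- The differential part `A₊`. -/
def dplus (f : ℤ → V) : ℤ → V := fun k => if 0 ≤ k then f k else 0

/-- Coefficient of `z^m` in `A(z+∂)(B(z))`, where `(z+∂)⁻¹` is expanded as
`Σₙ (-1)ⁿ z^(-n-1) ∂ⁿ` (i.e. via the generalized binomial coefficients). -/
def symbolSub (f g : ℤ → V) : ℤ → V := fun m =>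
  ∑ᶠ (k : ℤ) (n : ℕ), cchoose k n • (f k * Dit n (g (m - k + n)))

/-- Coefficientwise derivation on `V[λ]`. -/
def Dp (P : Polynomial V) : Polynomial V :=
  P.sum fun n c => Polynomial.C (DiffSuperAlg.D c) * Polynomial.X ^ n

/-- Iterated coefficientwise derivation on `V[λ]`. -/
def DpIt (n : ℕ) : Polynomial V → Polynomial V := (Dp (V := V))^[n]

/-- Coefficient of `w^j` in `(w+λ+∂)ⁿ (G(w))`, where `G(w) = Σ_q g_q w^q`. -/
def expW (n : ℕ) (g : ℤ → V) (j : ℤ) : Polynomial V :=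
  ∑ᶠ (m : ℕ) (α : ℕ), if m + α ≤ n then
    (((n.choose m) * ((n - m).choose α) : ℕ) : ℂ) •
      ((Polynomial.X : Polynomial V) ^ (n - m - α) * Polynomial.C (Dit m (g (j - (α : ℤ)))))
  else 0

/-- Coefficient of `z^i w^j` in `A(z) ι_z(z-w-λ-∂)⁻¹ (B(w))`. -/
def iotaTermB (f g : ℤ → V) (i j : ℤ) : Polynomial V :=
  ∑ᶠ n : ℕ, Polynomial.C (f (i + n + 1)) * expW n g j

/-- `A(w+λ+∂)` applied to `P ∈ V[λ]`: coefficient of `w^j`. -/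
def appW (f : ℤ → V) (P : Polynomial V) (j : ℤ) : Polynomial V :=
  ∑ᶠ (n : ℕ) (β : ℕ),
    (cchoose (j + n + β) n * cchoose (j + β) β) •
      ((Polynomial.X : Polynomial V) ^ β * (Polynomial.C (f (j + n + β)) * DpIt n P))

/-- Symbol of the adjoint `A*` at `λ - z` (expanded for large `|z|`):
coefficient of `z^i`, as an element of `V[λ]`. -/
def adjSymb (g : ℤ → V) (i : ℤ) : Polynomial V :=
  ∑ᶠ β : ℕ, ((-1 : ℂ) ^ i * cchoose (i + β) β) •
    ((Polynomial.X : Polynomial V) ^ β * Polynomial.C (adj g (i + β)))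

/-- Coefficient of `z^i w^j` in `A(w+λ+∂) ι_z(z-w-λ-∂)⁻¹ ((B)*(λ-z))`. -/
def iotaTermA (f g : ℤ → V) (i j : ℤ) : Polynomial V :=
  ∑ᶠ n : ℕ, appW (fun k => f (k - n)) (adjSymb g (i + n + 1)) j

/-- Coefficient of `z^i w^j` of the right-hand side
`A(w+λ+∂) ι_z(z-w-λ-∂)⁻¹ (B*)(λ-z) - A(z) ι_z(z-w-λ-∂)⁻¹ B(w)`
of the super Adler identity, for the entries `f = A_{hj}` and `g = A_{ik}`. -/
def adlerRHS (f g : ℤ → V) (i j : ℤ) : Polynomial V :=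
  iotaTermA f g i j - iotaTermB f g i j

/-- Coefficient of `w^j` in `A(w+λ)`. -/
def symbLam (f : ℤ → V) (j : ℤ) : Polynomial V :=
  ∑ᶠ β : ℕ, cchoose (j + β) β •
    ((Polynomial.X : Polynomial V) ^ β * Polynomial.C (f (j + β)))

variable {I : Type*} [Fintype I] [DecidableEq I]

/-- The super Adler-type operator property of a matrix pseudo-differential operator,
with respect to a λ-bracket `Br` and the parity function `p` on the index set. -/
def IsSATO (p : I → ZMod 2) (Br : V → V → Polynomial V) (A : I → I → ℤ → V) : Prop :=
  ∀ i j h k : I, ∀ zp wp : ℤ,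
    Br (A i j zp) (A h k wp) =
      sgn (p i * p j + p i * p h + p j * p h) • adlerRHS (A h j) (A i k) zp wp

/-- Homogeneous component of parity `π` of an element of `V`. -/
def gpart (π : ZMod 2) (v : V) : V :=
  letI := DiffSuperAlg.gradedAlgebra (V := V)
  ((DirectSum.decompose (DiffSuperAlg.grading (V := V)) v) π : V)

/-- The `∘`-product `(a⊗v)∘(b⊗w) = (-1)^(|b||v|) ab⊗vw` on matrix pseudo-differential
operators. -/
def circMul (p : I → ZMod 2) (M N : I → I → ℤ → V) : I → I → ℤ → V :=
  fun i j m => ∑ t : I, ∑ π : ZMod 2,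
    sgn ((p t + p j) * π) • pmul (fun k => gpart π (M i t k)) (N t j) m

/-- The `⋆`-product `(a⊗v)⋆(b⊗w) = (-1)^(|b||v|+|a||b|) ab⊗vw` on matrix
pseudo-differential operators. -/
def starMul (p : I → ZMod 2) (M N : I → I → ℤ → V) : I → I → ℤ → V :=
  fun i j m => ∑ t : I, ∑ π : ZMod 2,
    sgn ((p t + p j) * π + (p i + p t) * (p t + p j)) •
      pmul (fun k => gpart π (M i t k)) (N t j) m

/-- The identity matrix operator `𝟙_I`. -/
def idMat : I → I → ℤ → V := fun i j m => if i = j ∧ m = 0 then 1 else 0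

/-- `M` is a monic matrix (pseudo-)differential operator of order `N`. -/
def IsMonicMat (M : I → I → ℤ → V) (N : ℤ) : Prop :=
  (∀ i j : I, M i j N = if i = j then (1 : V) else 0) ∧
  (∀ i j : I, ∀ k : ℤ, N < k → M i j k = 0)

/-- `∘`-powers of a matrix pseudo-differential operator. -/
def circPow (p : I → ZMod 2) (M : I → I → ℤ → V) : ℕ → I → I → ℤ → V
  | 0 => idMat
  | n + 1 => circMul p M (circPow p M n)

/-- Matrix-wise differential part. -/
def dplusMat (M : I → I → ℤ → V) : I → I → ℤ → V := fun i j => dplus (M i j)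

/-- `Res str M`, the supertrace of the residue. -/
def strRes (p : I → ZMod 2) (M : I → I → ℤ → V) : V :=
  ∑ i : I, sgn (p i) • res (M i i)

/-- `{a_(λ+∂) c}_→ b`, i.e. `Σₙ (a₍ₙ₎c) (λ+∂)ⁿ b` for `P = {a_λ c}`. -/
def lamShift (P : Polynomial V) (b : V) : Polynomial V :=
  ∑ᶠ (n : ℕ) (m : ℕ), if m ≤ n then ((n.choose m : ℕ) : ℂ) •
    ((Polynomial.X : Polynomial V) ^ (n - m) * Polynomial.C (P.coeff n * Dit m b)) else 0

/-- `{b_(-λ-∂) a}` computed from `P = {b_λ a}`. -/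
def negLam (P : Polynomial V) : Polynomial V :=
  ∑ᶠ (n : ℕ) (m : ℕ), if m ≤ n then (((n.choose m : ℕ) : ℂ) * (-1 : ℂ) ^ n) •
    ((Polynomial.X : Polynomial V) ^ (n - m) * Polynomial.C (Dit m (P.coeff n))) else 0

end PDO

/-- A λ-bracket on a differential superalgebra: even, bilinear, sesquilinear,
satisfying the left and right Leibniz rules. -/
structure LambdaBracket (V : Type*) [DiffSuperAlg V] where
  br : V → V → Polynomial V
  add_left : ∀ a b c : V, br (a + b) c = br a c + br b c
  add_right : ∀ a b c : V, br a (b + c) = br a b + br a c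
  smul_left : ∀ (r : ℂ) (a b : V), br (r • a) b = r • br a b
  smul_right : ∀ (r : ℂ) (a b : V), br a (r • b) = r • br a b
  even : ∀ (i j : ZMod 2), ∀ a ∈ DiffSuperAlg.grading (V := V) i,
      ∀ b ∈ DiffSuperAlg.grading (V := V) j, ∀ n : ℕ,
      (br a b).coeff n ∈ DiffSuperAlg.grading (V := V) (i + j)
  sesq_left : ∀ a b : V, br (DiffSuperAlg.D a) b = -(Polynomial.X * br a b)
  sesq_right : ∀ a b : V,
      br a (DiffSuperAlg.D b) = Polynomial.X * br a b + PDO.Dp (br a b)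
  leibniz_left : ∀ (i j : ZMod 2), ∀ a ∈ DiffSuperAlg.grading (V := V) i,
      ∀ b ∈ DiffSuperAlg.grading (V := V) j, ∀ c : V,
      br a (b * c) = br a b * Polynomial.C c + PDO.sgn (i * j) • (Polynomial.C b * br a c)
  leibniz_right : ∀ (i j k : ZMod 2), ∀ a ∈ DiffSuperAlg.grading (V := V) i,
      ∀ b ∈ DiffSuperAlg.grading (V := V) j, ∀ c ∈ DiffSuperAlg.grading (V := V) k,
      br (a * b) c =
        PDO.sgn (j * k) • PDO.lamShift (br a c) b +
        PDO.sgn (i * (j + k)) • PDO.lamShift (br b c) a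

namespace PDO

variable {V : Type*} [DiffSuperAlg V]

/-- Skew-symmetry axiom: `{a_λ b} = -(-1)^(|a||b|) {b_(-λ-∂) a}`. -/
def SkewSymm (B : LambdaBracket V) : Prop :=
  ∀ (i j : ZMod 2), ∀ a ∈ DiffSuperAlg.grading (V := V) i,
    ∀ b ∈ DiffSuperAlg.grading (V := V) j,
    B.br a b = -(sgn (i * j) • negLam (B.br b a))

/-- Coefficient of `λ^l μ^m` in `{{a_λ b}_(λ+μ) c}`. -/
def jacComp (B : LambdaBracket V) (a b c : V) (l m : ℕ) : V :=
  ∑ᶠ n : ℕ, if n ≤ l then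
    (((l - n + m).choose m : ℕ) : ℂ) • (B.br ((B.br a b).coeff n) c).coeff (l - n + m)
  else 0

/-- Jacobi identity: `{a_λ {b_μ c}} = {{a_λ b}_(λ+μ) c} + (-1)^(|a||b|) {b_μ {a_λ c}}`,
written on the coefficient of `λ^l μ^m`. -/
def Jacobi (B : LambdaBracket V) : Prop :=
  ∀ (i j : ZMod 2), ∀ a ∈ DiffSuperAlg.grading (V := V) i,
    ∀ b ∈ DiffSuperAlg.grading (V := V) j, ∀ c : V, ∀ l m : ℕ,
    (B.br a ((B.br b c).coeff m)).coeff l =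
      jacComp B a b c l m + sgn (i * j) • (B.br b ((B.br a c).coeff l)).coeff m

/-- The family `u` differentially generates `V`. -/
def diffGen (u : Set V) : Prop :=
  Algebra.adjoin ℂ {x : V | ∃ v ∈ u, ∃ n : ℕ, x = Dit n v} = ⊤

end PDO

namespace PDO

variable {V : Type*} [DiffSuperAlg V] {I : Type*} [Fintype I] [DecidableEq I]

/-- The generic monic matrix differential operator
`L(∂) = 𝟙_I ∂^N + Σ_{M=0}^{N-1} Σ_{a,b} e_{ab} ⊗ u_{M,ab} ∂^M`. -/
def genericL (N : ℕ) (u : ℕ → I → I → V) : I → I → ℤ → V := fun a b m =>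
  if m = (N : ℤ) then (if a = b then 1 else 0)
  else if 0 ≤ m ∧ m < (N : ℤ) then u m.toNat a b else 0

end PDO

namespace PDO

variable {V : Type*} [DiffSuperAlg V]

open DiffSuperAlg Polynomial

lemma D_zero : D (0:V) = 0 := by
  have h := D_add (0:V) 0
  simp only [add_zero] at h
  exact left_eq_add.mp h

lemma D_one : D (1:V) = 0 := by
  have h := D_mul (1:V) 1
  simp only [mul_one, one_mul] at h
  exact left_eq_add.mp h

lemma Dit_succ (n : ℕ) (x : V) : Dit (n+1) x = D (Dit n x) :=
  Function.iterate_succ_apply' _ _ _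

lemma Dit_zero (n : ℕ) : Dit n (0:V) = 0 := by
  induction n with
  | zero => rfl
  | succ n ih => rw [Dit_succ, ih, D_zero]

lemma Dit_add (n : ℕ) (a b : V) : Dit n (a+b) = Dit n a + Dit n b := by
  induction n with
  | zero => rfl
  | succ n ih => rw [Dit_succ, Dit_succ, Dit_succ, ih, D_add]

lemma Dit_one {n : ℕ} (hn : n ≠ 0) : Dit n (1:V) = 0 := by
  obtain ⟨m, rfl⟩ := Nat.exists_eq_succ_of_ne_zero hn
  have : Dit (m+1) (1:V) = Dit m (D 1) := Function.iterate_succ_apply _ _ _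
  rw [this, D_one, Dit_zero]

lemma cchoose_zero_right (k : ℤ) : cchoose k 0 = 1 := by
  simp [cchoose]

lemma cchoose_zero_left {n : ℕ} (hn : n ≠ 0) : cchoose 0 n = 0 := by
  have : ((0:ℤ):ℂ) - ((0:ℕ):ℂ) = 0 := by simp
  rw [cchoose]
  rw [Finset.prod_eq_zero (Finset.mem_range.mpr (Nat.pos_of_ne_zero hn)) this]
  simp

lemma cchoose_nat_big {k n : ℕ} (h : k < n) : cchoose (k:ℤ) n = 0 := by
  rw [cchoose, Finset.prod_eq_zero (Finset.mem_range.mpr h) (by simp)]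
  simp

lemma Dp_zero : Dp (0 : Polynomial V) = 0 := by
  simp [Dp, Polynomial.sum_zero_index]

lemma Dp_C (v : V) : Dp (Polynomial.C v) = Polynomial.C (D v) := by
  rw [Dp, Polynomial.sum_C_index (by simp [D_zero])]
  simp

lemma Dp_add (P Q : Polynomial V) : Dp (P + Q) = Dp P + Dp Q := by
  rw [Dp, Polynomial.sum_add_index]
  · rfl
  · intro i; simp [D_zero]
  · intro a b₁ b₂; rw [D_add, map_add, add_mul]

lemma DpIt_succ (n : ℕ) (P : Polynomial V) : DpIt (n+1) P = Dp (DpIt n P) :=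
  Function.iterate_succ_apply' _ _ _

lemma DpIt_zero (n : ℕ) : DpIt n (0 : Polynomial V) = 0 := by
  induction n with
  | zero => rfl
  | succ n ih => rw [DpIt_succ, ih, Dp_zero]

lemma DpIt_add (n : ℕ) (P Q : Polynomial V) : DpIt n (P+Q) = DpIt n P + DpIt n Q := by
  induction n with
  | zero => rfl
  | succ n ih => rw [DpIt_succ, DpIt_succ, DpIt_succ, ih, Dp_add]

lemma DpIt_C (n : ℕ) (v : V) : DpIt n (Polynomial.C v) = Polynomial.C (Dit n v) := by
  induction n with
  | zero => rfl
  | succ n ih => rw [DpIt_succ, Dit_succ, ih, Dp_C]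

/-- upper bound on the support -/
def UB (f : ℤ → V) (b : ℤ) : Prop := ∀ k : ℤ, b < k → f k = 0

lemma UB.add {f g : ℤ → V} {b : ℤ} (hf : UB f b) (hg : UB g b) : UB (f + g) b :=
  fun k hk => by simp [Pi.add_apply, hf k hk, hg k hk]

lemma UB_one {b : ℤ} (hb : 0 ≤ b) : UB (one : ℤ → V) b := by
  intro k hk
  simp only [one]
  rw [if_neg (by omega)]

lemma UB_zero (b : ℤ) : UB (0 : ℤ → V) b := fun k _ => rfl

lemma finite_support_of_int_le {M : Type*} [AddCommMonoid M] {f : ℕ → M} (c : ℤ)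
    (h : ∀ n : ℕ, f n ≠ 0 → (n:ℤ) ≤ c) : (Function.support f).Finite := by
  apply Set.Finite.subset (Set.finite_Iic c.toNat)
  intro n hn
  have h1 := h n hn
  have h0 : (0:ℤ) ≤ c := le_trans (Int.ofNat_nonneg n) h1
  exact (Int.le_toNat h0).mpr h1

end PDO
namespace PDO

variable {V : Type*} [DiffSuperAlg V]

open DiffSuperAlg Polynomial

lemma one_ne {k : ℤ} (h : k ≠ 0) : (one : ℤ → V) k = 0 := by
  simp only [one, if_neg h]

lemma one_at : (one : ℤ → V) 0 = 1 := rfl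

lemma adj_eq_zero {g : ℤ → V} {b : ℤ} (hg : UB g b) {m : ℤ} (hm : b < m) : adj g m = 0 := by
  refine finsum_eq_zero_of_forall_eq_zero fun n => ?_
  rw [hg (m + n) (by omega), Dit_zero, smul_zero]

lemma adj_top {g : ℤ → V} {b : ℤ} (hg : UB g b) : adj g b = ((-1:ℂ)^b) • g b := by
  rw [adj, finsum_eq_single _ 0 ?_]
  · show ((-1 : ℂ) ^ (b + ((0:ℕ) : ℤ)) * cchoose (b + (0:ℕ)) 0) • Dit 0 (g (b + (0:ℕ))) = _
    simp only [Nat.cast_zero, add_zero, cchoose_zero_right, mul_one]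
    rfl
  · intro n hn
    rw [hg (b + n) (by omega), Dit_zero, smul_zero]

lemma adjSymb_eq_zero {g : ℤ → V} {b : ℤ} (hg : UB g b) {m : ℤ} (hm : b < m) :
    adjSymb g m = 0 := by
  refine finsum_eq_zero_of_forall_eq_zero fun β => ?_
  rw [adj_eq_zero hg (by omega), map_zero, mul_zero, smul_zero]

lemma adjSymb_top {g : ℤ → V} {b : ℤ} (hg : UB g b) :
    adjSymb g b = Polynomial.C (g b) := by
  rw [adjSymb, finsum_eq_single _ 0 ?_]
  · show ((-1 : ℂ) ^ b * cchoose (b + ((0:ℕ):ℤ)) 0) • ((X : Polynomial V) ^ (0:ℕ) * C (adj g (b + ((0:ℕ):ℤ)))) = _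
    simp only [Nat.cast_zero, add_zero, cchoose_zero_right, mul_one, pow_zero, one_mul]
    rw [adj_top hg, Polynomial.smul_C]
    congr 1
    rw [smul_smul, ← mul_zpow]
    norm_num
  · intro β hβ
    rw [adj_eq_zero hg (by omega), map_zero, mul_zero, smul_zero]

lemma adj_one (m : ℤ) : adj (one : ℤ → V) m = (one : ℤ → V) m := by
  rcases eq_or_ne m 0 with rfl | hm
  · rw [adj, finsum_eq_single _ 0 ?_]
    · show ((-1 : ℂ) ^ ((0:ℤ) + ((0:ℕ):ℤ)) * cchoose ((0:ℤ) + (0:ℕ)) 0) • Dit 0 ((one : ℤ → V) ((0:ℤ) + (0:ℕ))) = _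
      simp only [Nat.cast_zero, add_zero, cchoose_zero_right, mul_one]
      norm_num
      rfl
    · intro n hn
      rw [one_ne (V := V) (by omega), Dit_zero, smul_zero]
  · rw [one_ne hm, adj]
    refine finsum_eq_zero_of_forall_eq_zero fun n => ?_
    rcases eq_or_ne (m + (n:ℤ)) 0 with h | h
    · have hn : n ≠ 0 := by rintro rfl; simp at h; exact hm h
      rw [show (one : ℤ → V) (m + n) = 1 from by rw [one, if_pos h], Dit_one hn, smul_zero]
    · rw [one_ne h, Dit_zero, smul_zero]

lemma adjSymb_one {m : ℤ} (hm : 1 ≤ m) : adjSymb (one : ℤ → V) m = 0 := by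
  refine finsum_eq_zero_of_forall_eq_zero fun β => ?_
  rw [adj_one, one_ne (by omega), map_zero, mul_zero, smul_zero]

lemma appW_zeroP (f : ℤ → V) (j : ℤ) : appW f 0 j = 0 := by
  rw [appW]
  refine finsum_eq_zero_of_forall_eq_zero fun n => ?_
  refine finsum_eq_zero_of_forall_eq_zero fun β => ?_
  rw [DpIt_zero, mul_zero, mul_zero, smul_zero]

lemma appW_one_C (v : V) (j : ℤ) :
    appW (one : ℤ → V) (Polynomial.C v) j = if j = 0 then Polynomial.C v else 0 := by
  rcases eq_or_ne j 0 with rfl | hj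
  · rw [if_pos rfl, appW, finsum_eq_single _ 0 ?_]
    · rw [finsum_eq_single _ 0 ?_]
      · show (cchoose ((0:ℤ) + (0:ℕ) + (0:ℕ)) 0 * cchoose ((0:ℤ) + (0:ℕ)) 0) •
          ((X : Polynomial V) ^ (0:ℕ) * (C ((one : ℤ → V) ((0:ℤ) + (0:ℕ) + (0:ℕ))) * DpIt 0 (C v))) = _
        simp only [Nat.cast_zero, add_zero, cchoose_zero_right, mul_one, pow_zero, one_mul, one_smul]
        show C ((one : ℤ → V) 0) * C v = C v
        rw [one_at, map_one, one_mul]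
      · intro β hβ
        rw [one_ne (V := V) (by omega), map_zero, zero_mul, mul_zero, smul_zero]
    · intro n hn
      refine finsum_eq_zero_of_forall_eq_zero fun β => ?_
      rw [one_ne (V := V) (by omega), map_zero, zero_mul, mul_zero, smul_zero]
  · rw [if_neg hj, appW]
    refine finsum_eq_zero_of_forall_eq_zero fun n => ?_
    refine finsum_eq_zero_of_forall_eq_zero fun β => ?_
    rcases eq_or_ne (j + (n:ℤ) + (β:ℤ)) 0 with h | h
    · rcases Nat.eq_zero_or_pos n with rfl | hn
      · have hβ : β ≠ 0 := by rintro rfl; simp at h; exact hj h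
        have : j + (β:ℤ) = 0 := by push_cast at h ⊢; omega
        rw [show j + (0:ℕ) + (β:ℤ) = (0:ℤ) by push_cast at h ⊢; omega] at *
        rw [this, cchoose_zero_left hβ, mul_zero, zero_smul]
      · rw [h, cchoose_zero_left (by omega), zero_mul, zero_smul]
    · rw [one_ne h, map_zero, zero_mul, mul_zero, smul_zero]

lemma appW_shift_diag (v : V) (j : ℤ) (n₀ : ℕ) (h : (n₀:ℤ) = j) :
    appW (fun k => (one : ℤ → V) (k - n₀)) (Polynomial.C v) j = Polynomial.C v := by
  rw [appW, finsum_eq_single _ 0 ?_]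
  · rw [finsum_eq_single _ 0 ?_]
    · show (cchoose (j + (0:ℕ) + (0:ℕ)) 0 * cchoose (j + (0:ℕ)) 0) •
        ((X : Polynomial V) ^ (0:ℕ) * (C ((one : ℤ → V) (j + (0:ℕ) + (0:ℕ) - n₀)) * DpIt 0 (C v))) = _
      simp only [Nat.cast_zero, add_zero, cchoose_zero_right, mul_one, pow_zero, one_mul, one_smul]
      show C ((one : ℤ → V) (j - n₀)) * C v = C v
      rw [show j - (n₀:ℤ) = 0 by omega, one_at, map_one, one_mul]
    · intro β hβ
      rw [show j + ((0:ℕ):ℤ) + (β:ℤ) - n₀ = (β:ℤ) by omega, one_ne (by exact_mod_cast hβ),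
        map_zero, zero_mul, mul_zero, smul_zero]
  · intro n hn
    refine finsum_eq_zero_of_forall_eq_zero fun β => ?_
    rw [show j + (n:ℤ) + (β:ℤ) - n₀ = (n:ℤ) + β by omega, one_ne (by omega),
      map_zero, zero_mul, mul_zero, smul_zero]

lemma appW_shift_gt (P : Polynomial V) (j : ℤ) (n₀ : ℕ) (h : (n₀:ℤ) < j) :
    appW (fun k => (one : ℤ → V) (k - n₀)) P j = 0 := by
  rw [appW]
  refine finsum_eq_zero_of_forall_eq_zero fun n => ?_
  refine finsum_eq_zero_of_forall_eq_zero fun β => ?_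
  rw [one_ne (by omega), map_zero, zero_mul, mul_zero, smul_zero]

end PDO
namespace PDO

variable {V : Type*} [DiffSuperAlg V]

open DiffSuperAlg Polynomial

lemma expW_one (n : ℕ) (j : ℤ) :
    expW n (one : ℤ → V) j =
      if 0 ≤ j ∧ j ≤ (n:ℤ) then ((n.choose j.toNat : ℕ) : ℂ) • (X : Polynomial V) ^ (n - j.toNat) else 0 := by
  rw [expW, finsum_eq_single _ 0 ?_]
  · by_cases hj : 0 ≤ j ∧ j ≤ (n:ℤ)
    · rw [if_pos hj, finsum_eq_single _ j.toNat ?_]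
      · rw [if_pos (by omega)]
        rw [show j - (j.toNat:ℤ) = 0 by omega]
        show _ • ((X: Polynomial V) ^ (n - 0 - j.toNat) * C (Dit 0 ((one : ℤ → V) 0))) = _
        rw [one_at]
        show _ • ((X: Polynomial V) ^ (n - 0 - j.toNat) * C 1) = _
        simp
      · intro α hα
        by_cases hle : 0 + α ≤ n
        · rw [if_pos hle, one_ne (V := V) (by omega)]
          show _ • (_ * C (Dit 0 (0:V))) = 0
          rw [show Dit 0 (0:V) = 0 from rfl, map_zero, mul_zero, smul_zero]
        · rw [if_neg hle]
    · rw [if_neg hj]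
      refine finsum_eq_zero_of_forall_eq_zero fun α => ?_
      by_cases hle : 0 + α ≤ n
      · rw [if_pos hle, one_ne (V := V) (by omega)]
        show _ • (_ * C (Dit 0 (0:V))) = 0
        rw [show Dit 0 (0:V) = 0 from rfl, map_zero, mul_zero, smul_zero]
      · rw [if_neg hle]
  · intro m hm
    refine finsum_eq_zero_of_forall_eq_zero fun α => ?_
    by_cases hle : m + α ≤ n
    · rw [if_pos hle]
      rcases eq_or_ne (j - (α:ℤ)) 0 with h | h
      · rw [h, one_at, Dit_one hm, map_zero, mul_zero, smul_zero]
      · rw [one_ne h, Dit_zero, map_zero, mul_zero, smul_zero]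
    · rw [if_neg hle]

lemma iotaTermB_one_left {g : ℤ → V} {i : ℤ} (hi : 0 ≤ i) (j : ℤ) :
    iotaTermB one g i j = 0 := by
  rw [iotaTermB]
  refine finsum_eq_zero_of_forall_eq_zero fun n => ?_
  rw [one_ne (V := V) (by omega), map_zero, zero_mul]

lemma iotaTermB_one_a {f : ℤ → V} {N : ℕ} (hf : UB f N) (hN : 1 ≤ N) (j : ℤ) :
    iotaTermB f one ((N:ℤ)-1) j = if j = 0 then Polynomial.C (f N) else 0 := by
  rw [iotaTermB, finsum_eq_single _ 0 ?_]
  · rw [show (N:ℤ)-1+((0:ℕ):ℤ)+1 = (N:ℤ) by omega, expW_one]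
    rcases eq_or_ne j 0 with rfl | hj
    · rw [if_pos (by omega), if_pos rfl]
      simp
    · rw [if_neg (by omega), if_neg hj, mul_zero]
  · intro n hn
    rw [show (N:ℤ)-1+(n:ℤ)+1 = (N:ℤ)+n by omega, hf _ (by omega), map_zero, zero_mul]

lemma iotaTermB_one_b {f : ℤ → V} {N : ℕ} (hf : UB f N) (hN : 1 ≤ N) {i : ℤ} (hi : 0 ≤ i) :
    iotaTermB f one i ((N:ℤ)-1) = if i = 0 then Polynomial.C (f N) else 0 := by
  rw [iotaTermB, finsum_eq_single _ (N-1) ?_]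
  · rw [expW_one, if_pos (by constructor <;> omega)]
    rw [show ((N:ℤ)-1).toNat = N-1 by omega, Nat.choose_self, Nat.sub_self]
    rcases eq_or_ne i 0 with rfl | hi0
    · rw [if_pos rfl, show (0:ℤ)+((N-1:ℕ):ℤ)+1 = (N:ℤ) by omega]
      simp
    · rw [if_neg hi0, hf _ (by omega), map_zero, zero_mul]
  · intro n hn
    rcases lt_or_gt_of_ne hn with h | h
    · rw [expW_one, if_neg (by omega), mul_zero]
    · rw [hf _ (by omega), map_zero, zero_mul]

lemma iotaTermA_one_right (f : ℤ → V) {i : ℤ} (hi : 0 ≤ i) (j : ℤ) :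
    iotaTermA f one i j = 0 := by
  rw [iotaTermA]
  refine finsum_eq_zero_of_forall_eq_zero fun n => ?_
  rw [adjSymb_one (by omega), appW_zeroP]

lemma iotaTermA_one_a {g : ℤ → V} {N : ℕ} (hg : UB g N) (hN : 1 ≤ N) (j : ℤ) :
    iotaTermA one g ((N:ℤ)-1) j = if j = 0 then Polynomial.C (g N) else 0 := by
  rw [iotaTermA, finsum_eq_single _ 0 ?_]
  · rw [show (N:ℤ)-1+((0:ℕ):ℤ)+1 = (N:ℤ) by omega, adjSymb_top hg]
    rw [show (fun k : ℤ => (one : ℤ → V) (k - ((0:ℕ):ℤ))) = one from by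
      funext k; rw [Nat.cast_zero, sub_zero]]
    rw [appW_one_C]
  · intro n hn
    rw [show (N:ℤ)-1+(n:ℤ)+1 = (N:ℤ)+n by omega, adjSymb_eq_zero hg (by omega), appW_zeroP]

lemma iotaTermA_one_b {g : ℤ → V} {N : ℕ} (hg : UB g N) (hN : 1 ≤ N) {i : ℤ} (hi : 0 ≤ i) :
    iotaTermA one g i ((N:ℤ)-1) = if i = 0 then Polynomial.C (g N) else 0 := by
  rw [iotaTermA, finsum_eq_single _ (N-1) ?_]
  · rcases eq_or_ne i 0 with rfl | hi0
    · rw [if_pos rfl, show (0:ℤ)+((N-1:ℕ):ℤ)+1 = (N:ℤ) by omega, adjSymb_top hg,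
        appW_shift_diag _ _ _ (by omega)]
    · rw [if_neg hi0, adjSymb_eq_zero hg (by omega), appW_zeroP]
  · intro n hn
    rcases lt_or_gt_of_ne hn with h | h
    · rw [appW_shift_gt _ _ _ (by omega)]
    · rw [adjSymb_eq_zero hg (by omega), appW_zeroP]

end PDO
namespace PDO

variable {V : Type*} [DiffSuperAlg V]

open DiffSuperAlg Polynomial

lemma UB.shift {f : ℤ → V} {b : ℤ} (hf : UB f b) (n : ℕ) :
    UB (fun k => f (k - n)) (b + n) := fun k hk => hf _ (by omega)

lemma expW_add (n : ℕ) (g t : ℤ → V) (j : ℤ) :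
    expW n (g + t) j = expW n g j + expW n t j := by
  rw [expW, expW, expW]
  have key : ∀ m : ℕ, (∑ᶠ α : ℕ, if m + α ≤ n then
      (((n.choose m) * ((n - m).choose α) : ℕ) : ℂ) •
        ((X : Polynomial V) ^ (n - m - α) * C (Dit m ((g + t) (j - (α:ℤ))))) else 0)
      = (∑ᶠ α : ℕ, if m + α ≤ n then (((n.choose m) * ((n - m).choose α) : ℕ) : ℂ) •
        ((X : Polynomial V) ^ (n - m - α) * C (Dit m (g (j - (α:ℤ))))) else 0)
      + (∑ᶠ α : ℕ, if m + α ≤ n then (((n.choose m) * ((n - m).choose α) : ℕ) : ℂ) •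
        ((X : Polynomial V) ^ (n - m - α) * C (Dit m (t (j - (α:ℤ))))) else 0) := by
    intro m
    rw [← finsum_add_distrib ?_ ?_]
    · refine finsum_congr fun α => ?_
      by_cases hle : m + α ≤ n
      · rw [if_pos hle, if_pos hle, if_pos hle, Pi.add_apply, Dit_add, map_add, mul_add, smul_add]
      · rw [if_neg hle, if_neg hle, if_neg hle, add_zero]
    · refine finite_support_of_int_le (n:ℤ) fun α hα => ?_
      by_contra hc
      exact hα (if_neg (by omega))
    · refine finite_support_of_int_le (n:ℤ) fun α hα => ?_
      by_contra hc
      exact hα (if_neg (by omega))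
  rw [← finsum_add_distrib ?_ ?_]
  · exact finsum_congr key
  · refine finite_support_of_int_le (n:ℤ) fun m hm => ?_
    by_contra hc
    refine hm (finsum_eq_zero_of_forall_eq_zero fun α => if_neg (by omega))
  · refine finite_support_of_int_le (n:ℤ) fun m hm => ?_
    by_contra hc
    refine hm (finsum_eq_zero_of_forall_eq_zero fun α => if_neg (by omega))

lemma iotaTermB_add_left {f s : ℤ → V} {bf bs : ℤ} (hf : UB f bf) (hs : UB s bs)
    (g : ℤ → V) (i j : ℤ) :
    iotaTermB (f + s) g i j = iotaTermB f g i j + iotaTermB s g i j := by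
  rw [iotaTermB, iotaTermB, iotaTermB, ← finsum_add_distrib ?_ ?_]
  · refine finsum_congr fun n => ?_
    rw [Pi.add_apply, map_add, add_mul]
  · refine finite_support_of_int_le (bf - i - 1) fun n hn => ?_
    by_contra hc
    exact hn (by rw [hf _ (by omega), map_zero, zero_mul])
  · refine finite_support_of_int_le (bs - i - 1) fun n hn => ?_
    by_contra hc
    exact hn (by rw [hs _ (by omega), map_zero, zero_mul])

lemma iotaTermB_add_right {f : ℤ → V} {bf : ℤ} (hf : UB f bf) (g t : ℤ → V) (i j : ℤ) :
    iotaTermB f (g + t) i j = iotaTermB f g i j + iotaTermB f t i j := by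
  rw [iotaTermB, iotaTermB, iotaTermB, ← finsum_add_distrib ?_ ?_]
  · refine finsum_congr fun n => ?_
    rw [expW_add, mul_add]
  · refine finite_support_of_int_le (bf - i - 1) fun n hn => ?_
    by_contra hc
    exact hn (by rw [hf _ (by omega), map_zero, zero_mul])
  · refine finite_support_of_int_le (bf - i - 1) fun n hn => ?_
    by_contra hc
    exact hn (by rw [hf _ (by omega), map_zero, zero_mul])

lemma adj_add {g t : ℤ → V} {bg bt : ℤ} (hg : UB g bg) (ht : UB t bt) (m : ℤ) :
    adj (g + t) m = adj g m + adj t m := by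
  rw [adj, adj, adj, ← finsum_add_distrib ?_ ?_]
  · refine finsum_congr fun n => ?_
    rw [Pi.add_apply, Dit_add, smul_add]
  · refine finite_support_of_int_le (bg - m) fun n hn => ?_
    by_contra hc
    exact hn (by rw [hg _ (by omega), Dit_zero, smul_zero])
  · refine finite_support_of_int_le (bt - m) fun n hn => ?_
    by_contra hc
    exact hn (by rw [ht _ (by omega), Dit_zero, smul_zero])

lemma adjSymb_add {g t : ℤ → V} {bg bt : ℤ} (hg : UB g bg) (ht : UB t bt) (m : ℤ) :
    adjSymb (g + t) m = adjSymb g m + adjSymb t m := by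
  rw [adjSymb, adjSymb, adjSymb, ← finsum_add_distrib ?_ ?_]
  · refine finsum_congr fun β => ?_
    rw [adj_add hg ht, map_add, mul_add, smul_add]
  · refine finite_support_of_int_le (bg - m) fun β hβ => ?_
    by_contra hc
    exact hβ (by rw [adj_eq_zero hg (by omega), map_zero, mul_zero, smul_zero])
  · refine finite_support_of_int_le (bt - m) fun β hβ => ?_
    by_contra hc
    exact hβ (by rw [adj_eq_zero ht (by omega), map_zero, mul_zero, smul_zero])

lemma appW_add_P {f : ℤ → V} {bf : ℤ} (hf : UB f bf) (P Q : Polynomial V) (j : ℤ) :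
    appW f (P + Q) j = appW f P j + appW f Q j := by
  rw [appW, appW, appW]
  have key : ∀ n : ℕ, (∑ᶠ β : ℕ, (cchoose (j + n + β) n * cchoose (j + β) β) •
        ((X : Polynomial V) ^ β * (C (f (j + n + β)) * DpIt n (P + Q))))
      = (∑ᶠ β : ℕ, (cchoose (j + n + β) n * cchoose (j + β) β) •
        ((X : Polynomial V) ^ β * (C (f (j + n + β)) * DpIt n P)))
      + (∑ᶠ β : ℕ, (cchoose (j + n + β) n * cchoose (j + β) β) •
        ((X : Polynomial V) ^ β * (C (f (j + n + β)) * DpIt n Q))) := by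
    intro n
    rw [← finsum_add_distrib ?_ ?_]
    · refine finsum_congr fun β => ?_
      rw [DpIt_add, mul_add, mul_add, smul_add]
    · refine finite_support_of_int_le (bf - j - n) fun β hβ => ?_
      by_contra hc
      exact hβ (by rw [hf _ (by omega), map_zero, zero_mul, mul_zero, smul_zero])
    · refine finite_support_of_int_le (bf - j - n) fun β hβ => ?_
      by_contra hc
      exact hβ (by rw [hf _ (by omega), map_zero, zero_mul, mul_zero, smul_zero])
  rw [← finsum_add_distrib ?_ ?_]
  · exact finsum_congr key
  · refine finite_support_of_int_le (bf - j) fun n hn => ?_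
    by_contra hc
    refine hn (finsum_eq_zero_of_forall_eq_zero fun β => ?_)
    rw [hf _ (by omega), map_zero, zero_mul, mul_zero, smul_zero]
  · refine finite_support_of_int_le (bf - j) fun n hn => ?_
    by_contra hc
    refine hn (finsum_eq_zero_of_forall_eq_zero fun β => ?_)
    rw [hf _ (by omega), map_zero, zero_mul, mul_zero, smul_zero]

lemma appW_add_f {f s : ℤ → V} {bf bs : ℤ} (hf : UB f bf) (hs : UB s bs)
    (P : Polynomial V) (j : ℤ) :
    appW (f + s) P j = appW f P j + appW s P j := by
  rw [appW, appW, appW]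
  have key : ∀ n : ℕ, (∑ᶠ β : ℕ, (cchoose (j + n + β) n * cchoose (j + β) β) •
        ((X : Polynomial V) ^ β * (C ((f + s) (j + n + β)) * DpIt n P)))
      = (∑ᶠ β : ℕ, (cchoose (j + n + β) n * cchoose (j + β) β) •
        ((X : Polynomial V) ^ β * (C (f (j + n + β)) * DpIt n P)))
      + (∑ᶠ β : ℕ, (cchoose (j + n + β) n * cchoose (j + β) β) •
        ((X : Polynomial V) ^ β * (C (s (j + n + β)) * DpIt n P))) := by
    intro n
    rw [← finsum_add_distrib ?_ ?_]
    · refine finsum_congr fun β => ?_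
      rw [Pi.add_apply, map_add, add_mul, mul_add, smul_add]
    · refine finite_support_of_int_le (bf - j - n) fun β hβ => ?_
      by_contra hc
      exact hβ (by rw [hf _ (by omega), map_zero, zero_mul, mul_zero, smul_zero])
    · refine finite_support_of_int_le (bs - j - n) fun β hβ => ?_
      by_contra hc
      exact hβ (by rw [hs _ (by omega), map_zero, zero_mul, mul_zero, smul_zero])
  rw [← finsum_add_distrib ?_ ?_]
  · exact finsum_congr key
  · refine finite_support_of_int_le (bf - j) fun n hn => ?_
    by_contra hc
    refine hn (finsum_eq_zero_of_forall_eq_zero fun β => ?_)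
    rw [hf _ (by omega), map_zero, zero_mul, mul_zero, smul_zero]
  · refine finite_support_of_int_le (bs - j) fun n hn => ?_
    by_contra hc
    refine hn (finsum_eq_zero_of_forall_eq_zero fun β => ?_)
    rw [hs _ (by omega), map_zero, zero_mul, mul_zero, smul_zero]

lemma iotaTermA_add_left {f s g : ℤ → V} {bf bs bg : ℤ} (hf : UB f bf) (hs : UB s bs)
    (hg : UB g bg) (i j : ℤ) :
    iotaTermA (f + s) g i j = iotaTermA f g i j + iotaTermA s g i j := by
  rw [iotaTermA, iotaTermA, iotaTermA, ← finsum_add_distrib ?_ ?_]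
  · refine finsum_congr fun n => ?_
    have : (fun k : ℤ => (f + s) (k - n)) =
        (fun k : ℤ => f (k - n)) + (fun k : ℤ => s (k - n)) := rfl
    rw [this, appW_add_f (hf.shift n) (hs.shift n)]
  · refine finite_support_of_int_le (bg - i - 1) fun n hn => ?_
    by_contra hc
    exact hn (by rw [adjSymb_eq_zero hg (by omega), appW_zeroP])
  · refine finite_support_of_int_le (bg - i - 1) fun n hn => ?_
    by_contra hc
    exact hn (by rw [adjSymb_eq_zero hg (by omega), appW_zeroP])

lemma iotaTermA_add_right {f g t : ℤ → V} {bf bg bt : ℤ} (hf : UB f bf) (hg : UB g bg)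
    (ht : UB t bt) (i j : ℤ) :
    iotaTermA f (g + t) i j = iotaTermA f g i j + iotaTermA f t i j := by
  rw [iotaTermA, iotaTermA, iotaTermA, ← finsum_add_distrib ?_ ?_]
  · refine finsum_congr fun n => ?_
    rw [adjSymb_add hg ht, appW_add_P (hf.shift n)]
  · refine finite_support_of_int_le (bg - i - 1) fun n hn => ?_
    by_contra hc
    exact hn (by rw [adjSymb_eq_zero hg (by omega), appW_zeroP])
  · refine finite_support_of_int_le (bt - i - 1) fun n hn => ?_
    by_contra hc
    exact hn (by rw [adjSymb_eq_zero ht (by omega), appW_zeroP])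

end PDO
namespace PDO

variable {V : Type*} [DiffSuperAlg V]

open DiffSuperAlg Polynomial

lemma adler_pert {N : ℕ} (hN : 1 ≤ N) (f g : ℤ → V) (hf : UB f N) (hg : UB g N)
    (zp wp : ℤ) (κ : V → Polynomial V) (hκ : κ 0 = 0)
    (hAo : ∀ h : ℤ → V, UB h (N:ℤ) → iotaTermA h one zp wp = 0)
    (hBo : ∀ h : ℤ → V, UB h (N:ℤ) → iotaTermB h one zp wp = κ (h N))
    (hAog : ∀ h : ℤ → V, UB h (N:ℤ) → iotaTermA one h zp wp = κ (h N))
    (hBog : ∀ h : ℤ → V, UB h (N:ℤ) → iotaTermB one h zp wp = 0)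
    (S T : Prop) [Decidable S] [Decidable T]
    (hST : (if S then κ (g N) else 0) = (if T then κ (f N) else 0)) :
    adlerRHS (f + (if S then one else 0)) (g + (if T then one else 0)) zp wp
      = adlerRHS f g zp wp := by
  have hone : UB (one : ℤ → V) (N:ℤ) := UB_one (by omega)
  have honeN : (one : ℤ → V) (N:ℤ) = 0 := one_ne (by omega)
  by_cases hS : S <;> by_cases hT : T
  · rw [if_pos hS, if_pos hT]
    have hval : κ (g N) = κ (f N) := by
      rw [if_pos hS, if_pos hT] at hST; exact hST
    rw [adlerRHS, adlerRHS,
      iotaTermA_add_left hf hone (hg.add hone) zp wp,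
      iotaTermA_add_right hf hg hone zp wp,
      iotaTermA_add_right hone hg hone zp wp,
      iotaTermB_add_left hf hone _ zp wp,
      iotaTermB_add_right hf g one zp wp,
      iotaTermB_add_right hone g one zp wp,
      hAo f hf, hAo one hone, hAog g hg,
      hBo f hf, hBog g hg, hBog one hone]
    rw [hval]
    abel
  · rw [if_pos hS, if_neg hT, add_zero]
    have hval : κ (g N) = 0 := by rw [if_pos hS, if_neg hT] at hST; exact hST
    rw [adlerRHS, adlerRHS,
      iotaTermA_add_left hf hone hg zp wp,
      iotaTermB_add_left hf hone g zp wp,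
      hAog g hg, hBog g hg, hval]
    abel
  · rw [if_neg hS, if_pos hT, add_zero]
    have hval : κ (f N) = 0 := by rw [if_neg hS, if_pos hT] at hST; exact hST.symm
    rw [adlerRHS, adlerRHS,
      iotaTermA_add_right hf hg hone zp wp,
      iotaTermB_add_right hf g one zp wp,
      hAo f hf, hBo f hf, hval]
    abel
  · rw [if_neg hS, if_neg hT, add_zero, add_zero]

lemma one_mem_grading : (1:V) ∈ grading (V := V) (0 : ZMod 2) := by
  letI := DiffSuperAlg.gradedAlgebra (V := V)
  exact SetLike.one_mem_graded (DiffSuperAlg.grading (V := V))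

lemma sgn_zero : sgn (0 : ZMod 2) = 1 := by
  rw [sgn, ZMod.val_zero, pow_zero]

lemma lamShift_one (P : Polynomial V) : lamShift P (1:V) = P := by
  rw [lamShift]
  have key : ∀ n : ℕ, (∑ᶠ m : ℕ, if m ≤ n then ((n.choose m : ℕ) : ℂ) •
      ((X : Polynomial V) ^ (n - m) * C (P.coeff n * Dit m (1:V))) else 0)
      = C (P.coeff n) * X ^ n := by
    intro n
    rw [finsum_eq_single _ 0 ?_]
    · rw [if_pos (Nat.zero_le n)]
      show _ • ((X : Polynomial V) ^ (n-0) * C (P.coeff n * (1:V))) = _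
      simp only [Nat.choose_zero_right, Nat.cast_one, one_smul, Nat.sub_zero, mul_one]
      rw [X_pow_mul]
    · intro m hm
      by_cases hle : m ≤ n
      · rw [if_pos hle, Dit_one hm, mul_zero, map_zero, mul_zero, smul_zero]
      · rw [if_neg hle]
  rw [finsum_congr key, finsum_eq_finset_sum_of_support_subset _ (s := P.support) ?_]
  · show P.sum (fun n a => C a * X ^ n) = P
    exact Polynomial.sum_C_mul_X_pow_eq P
  · intro n hn
    rw [Function.mem_support] at hn
    by_contra hc
    rw [Polynomial.notMem_support_iff.mp hc] at hn
    simp at hn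

lemma br_zero_left (B : LambdaBracket V) (c : V) : B.br 0 c = 0 := by
  have h := B.smul_left 0 0 c
  rw [zero_smul, zero_smul] at h
  exact h

lemma br_zero_right (B : LambdaBracket V) (c : V) : B.br c 0 = 0 := by
  have h := B.smul_right 0 c 0
  rw [zero_smul, zero_smul] at h
  exact h

lemma br_one_right (B : LambdaBracket V) {π : ZMod 2} {x : V}
    (hx : x ∈ grading (V := V) π) : B.br x 1 = 0 := by
  have h := B.leibniz_left π 0 x hx 1 one_mem_grading 1
  rw [mul_one, map_one, mul_one, one_mul, mul_zero, sgn_zero, one_smul] at h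
  exact left_eq_add.mp h

lemma br_one_left (B : LambdaBracket V) {π : ZMod 2} {c : V}
    (hc : c ∈ grading (V := V) π) : B.br 1 c = 0 := by
  have h := B.leibniz_right 0 0 π 1 one_mem_grading 1 one_mem_grading c hc
  rw [one_mul, zero_mul, zero_add, zero_mul, sgn_zero, one_smul, lamShift_one] at h
  exact left_eq_add.mp h

lemma br_pert (B : LambdaBracket V) {π₁ π₂ : ZMod 2} {x y : V}
    (hx : x ∈ grading (V := V) π₁) (hy : y ∈ grading (V := V) π₂)
    {e e' : V} (he : e = 0 ∨ e = 1) (he' : e' = 0 ∨ e' = 1) :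
    B.br (x + e) (y + e') = B.br x y := by
  have he'g : e' ∈ grading (V := V) (0 : ZMod 2) := by
    rcases he' with rfl | rfl
    · exact zero_mem _
    · exact one_mem_grading
  have h1 : B.br x e' = 0 := by
    rcases he' with rfl | rfl
    · exact br_zero_right B x
    · exact br_one_right B hx
  have h2 : B.br e (y + e') = 0 := by
    rcases he with rfl | rfl
    · exact br_zero_left B _
    · rw [B.add_right, br_one_left B hy, br_one_left B he'g, add_zero]
  rw [B.add_left, h2, add_zero, B.add_right, h1, add_zero]

variable {I : Type*} [Fintype I] [DecidableEq I]

lemma genericL_UB (N : ℕ) (u : ℕ → I → I → V) (a b : I) : UB (genericL N u a b) N := by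
  intro k hk
  rw [genericL, if_neg (by omega), if_neg (by omega)]

lemma genericL_top (N : ℕ) (u : ℕ → I → I → V) (a b : I) :
    genericL N u a b (N:ℤ) = if a = b then 1 else 0 := by
  rw [genericL, if_pos rfl]

lemma genericL_out {N : ℕ} (u : ℕ → I → I → V) (a b : I) {k : ℤ}
    (h : k < 0 ∨ (N:ℤ) < k) : genericL N u a b k = 0 := by
  rw [genericL, if_neg (by omega), if_neg (by omega)]

lemma genericL_pen {N : ℕ} (hN : 1 ≤ N) (u : ℕ → I → I → V) (a b : I) :
    genericL N u a b ((N:ℤ)-1) = u (N-1) a b := by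
  rw [genericL, if_neg (by omega), if_pos (by omega)]
  congr 1
  omega

lemma genericL_mem (N : ℕ) (u : ℕ → I → I → V) (p : I → ZMod 2)
    (hu : ∀ (M : ℕ) (a b : I), u M a b ∈ grading (V := V) (p a + p b))
    (a b : I) (m : ℤ) : genericL N u a b m ∈ grading (V := V) (p a + p b) := by
  rw [genericL]
  split_ifs with h1 h2
  · subst h2
    have : p a + p a = 0 := by
      have : ∀ x : ZMod 2, x + x = 0 := by decide
      exact this _
    rw [this]
    exact one_mem_grading
  · exact zero_mem _
  · exact hu _ _ _
  · exact zero_mem _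

end PDO
/-- Decompose the λ-bracket obtained by requiring
`L^ε(∂) = L(∂) + ε 𝟙_I` to be of super Adler type as `{·_λ·}_ε = {·_λ·}_H + ε{·_λ·}_K`
(the `ε²` contribution vanishes).  Then the second bracket `{·_λ·}_K` annihilates the
top coefficients: `{u_{N-1,ab} _λ L_{cd}(w)}_K = 0` and
`{L_{ab}(z) _λ u_{N-1,cd}}_K = 0`. -/
theorem K_bracket_kills_top (V : Type*) [DiffSuperAlg V] {I : Type*} [Fintype I]
    [DecidableEq I] (p : I → ZMod 2) (BH BK : LambdaBracket V)
    (N : ℕ) (hN : 1 ≤ N) (u : ℕ → I → I → V)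
    (hu : ∀ (M : ℕ) (a b : I), u M a b ∈ DiffSuperAlg.grading (V := V) (p a + p b))
    (hsato : ∀ ε : ℂ,
      PDO.IsSATO p (fun a b => BH.br a b + ε • BK.br a b)
        (fun a b m => PDO.genericL N u a b m
          + if a = b ∧ m = 0 then algebraMap ℂ V ε else 0)) :
    ∀ (a b c d : I) (zp wp : ℤ),
      BK.br (u (N - 1) a b) (PDO.genericL N u c d wp) = 0
      ∧ BK.br (PDO.genericL N u a b zp) (u (N - 1) c d) = 0 := by
  intro a b c d zp wp
  have hmem : ∀ (x y : I) (m : ℤ),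
      PDO.genericL N u x y m ∈ DiffSuperAlg.grading (V := V) (p x + p y) :=
    fun x y m => PDO.genericL_mem N u p hu x y m
  have hITE : ∀ (x y : I) (m : ℤ),
      (if x = y ∧ m = 0 then (1:V) else 0) = 0 ∨ (if x = y ∧ m = 0 then (1:V) else 0) = 1 := by
    intro x y m
    split_ifs
    · exact Or.inr rfl
    · exact Or.inl rfl
  have hfun : ∀ (x y : I),
      (fun m => PDO.genericL N u x y m + if x = y ∧ m = 0 then (1:V) else 0)
        = PDO.genericL N u x y + (if x = y then PDO.one else (0 : ℤ → V)) := by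
    intro x y
    funext m
    by_cases h : x = y
    · simp [h, PDO.one, Pi.add_apply]
    · simp [h]
  have key : ∀ (a b c d : I) (zp wp : ℤ),
      BK.br (PDO.genericL N u a b zp) (PDO.genericL N u c d wp)
        = PDO.sgn (p a * p b + p a * p c + p b * p c) •
            PDO.adlerRHS (fun m => PDO.genericL N u c b m + if c = b ∧ m = 0 then (1:V) else 0)
                         (fun m => PDO.genericL N u a d m + if a = d ∧ m = 0 then (1:V) else 0) zp wp
          - PDO.sgn (p a * p b + p a * p c + p b * p c) •
            PDO.adlerRHS (PDO.genericL N u c b) (PDO.genericL N u a d) zp wp := by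
    intro a b c d zp wp
    have h1 := hsato 1 a b c d zp wp
    have h0 := hsato 0 a b c d zp wp
    simp only [map_zero, map_one, ite_self, add_zero, zero_smul, one_smul] at h1 h0
    rw [PDO.br_pert BH (hmem a b zp) (hmem c d wp) (hITE a b zp) (hITE c d wp),
        PDO.br_pert BK (hmem a b zp) (hmem c d wp) (hITE a b zp) (hITE c d wp)] at h1
    rw [h0] at h1
    exact eq_sub_of_add_eq' h1
  have hST : ∀ (v : ℤ), (if c = b then (if v = 0 then Polynomial.C (PDO.genericL N u a d (N:ℤ)) else 0) else 0)
      = (if a = d then (if v = 0 then Polynomial.C (PDO.genericL N u c b (N:ℤ)) else 0) else 0) := by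
    intro v
    rw [PDO.genericL_top, PDO.genericL_top]
    split_ifs <;> simp_all
  constructor
  · rw [← PDO.genericL_pen hN u a b, key a b c d ((N:ℤ)-1) wp, hfun c b, hfun a d,
      PDO.adler_pert hN _ _ (PDO.genericL_UB N u c b) (PDO.genericL_UB N u a d)
        ((N:ℤ)-1) wp (fun v => if wp = 0 then Polynomial.C v else 0)
        (by split_ifs <;> simp)
        (fun h _ => PDO.iotaTermA_one_right h (by omega) wp)
        (fun h hh => PDO.iotaTermB_one_a hh hN wp)
        (fun h hh => PDO.iotaTermA_one_a hh hN wp)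
        (fun h _ => PDO.iotaTermB_one_left (by omega) wp)
        (c = b) (a = d) (hST wp)]
    exact sub_self _
  · rw [← PDO.genericL_pen hN u c d]
    by_cases hz : 0 ≤ zp
    · rw [key a b c d zp ((N:ℤ)-1), hfun c b, hfun a d,
        PDO.adler_pert hN _ _ (PDO.genericL_UB N u c b) (PDO.genericL_UB N u a d)
          zp ((N:ℤ)-1) (fun v => if zp = 0 then Polynomial.C v else 0)
          (by split_ifs <;> simp)
          (fun h _ => PDO.iotaTermA_one_right h hz ((N:ℤ)-1))
          (fun h hh => PDO.iotaTermB_one_b hh hN hz)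
          (fun h hh => PDO.iotaTermA_one_b hh hN hz)
          (fun h _ => PDO.iotaTermB_one_left hz ((N:ℤ)-1))
          (c = b) (a = d) (hST zp)]
      exact sub_self _
    · rw [PDO.genericL_out u a b (Or.inl (by omega)), PDO.br_zero_left]
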